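/- For every natural number h there exists a constant η (independent of r) such that every graph G of highway dimension at most h has, for every r > 0, an (r,η) path cover. -/

import Mathlib

open SimpleGraph

/-- The length (total weight) of a walk under an edge-weight function `w`. -/
noncomputable def wlen {V : Type*} {G : SimpleGraph V} (w : Sym2 V → ℝ) {u v : V}
    (p : G.Walk u v) : ℝ :=
  (p.edges.map w).sum

/-- `p` is a subwalk (subpath) of `q`. -/
def IsSubwalk {V : Type*} {G : SimpleGraph V} {u v a b : V}
    (p : G.Walk u v) (q : G.Walk a b) : Prop :=
  ∃ (q1 : G.Walk a u) (q2 : G.Walk v b), q = (q1.append p).append q2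

/-- Shortest-path distance as the infimum of walk lengths. -/
noncomputable def wdist {V : Type*} (G : SimpleGraph V) (w : Sym2 V → ℝ) (u v : V) : ℝ :=
  sInf {x : ℝ | ∃ p : G.Walk u v, x = wlen w p}

/-- A finite connected positively-weighted graph (all weights at least 1) with
unique shortest paths, in which every edge is the unique shortest path between
its endpoints.  `sp u v` is the unique shortest path from `u` to `v`. -/
structure Setting (V : Type) [Fintype V] where
  G : SimpleGraph V
  w : Sym2 V → ℝ
  connected : G.Connected
  one_le_w : ∀ e ∈ G.edgeSet, 1 ≤ w e
  sp : ∀ u v : V, G.Walk u v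
  sp_isPath : ∀ u v : V, (sp u v).IsPath
  sp_shortest : ∀ (u v : V) (q : G.Walk u v), wlen w (sp u v) ≤ wlen w q
  sp_unique : ∀ (u v : V) (q : G.Walk u v), q.IsPath →
    wlen w q = wlen w (sp u v) → q = sp u v
  edge_sp : ∀ (u v : V) (h : G.Adj u v),
    sp u v = SimpleGraph.Walk.cons h SimpleGraph.Walk.nil

namespace Setting

variable {V : Type} [Fintype V]

/-- Shortest-path distance `d(u,v)`. -/
noncomputable def d (S : Setting V) (u v : V) : ℝ := wlen S.w (S.sp u v)

/-- The ball `B(v,r)`. -/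
def ball (S : Setting V) (v : V) (r : ℝ) : Set V := {u : V | S.d v u ≤ r}

/-- `maxedge(p(u,v)) ≤ r`: every edge of the shortest path has weight at most `r`. -/
def maxedgeLE (S : Setting V) (u v : V) (r : ℝ) : Prop :=
  ∀ e ∈ (S.sp u v).edges, S.w e ≤ r

/-- An `(r,k)` vertex cover. -/
def IsVertexCover (S : Setting V) (r : ℝ) (k : ℕ) (C : Set V) : Prop :=
  (∀ v1 v2 : V, r < S.d v1 v2 → S.maxedgeLE v1 v2 r →
      ∃ c ∈ C, c ∈ (S.sp v1 v2).support) ∧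
  (∀ v : V, (S.ball v (2 * r) ∩ C).ncard ≤ k)

/-- Discrete highway dimension at most `h`. -/
def DiscreteHDLE (S : Setting V) (h : ℕ) : Prop :=
  ∀ (v : V) (r : ℝ), 0 < r →
    ∃ C : Set V, C.ncard ≤ h ∧
      ∀ v1 v2 : V, (∀ x ∈ (S.sp v1 v2).support, x ∈ S.ball v (4 * r)) →
        r < S.d v1 v2 → ∃ c ∈ C, c ∈ (S.sp v1 v2).support

/-- The (unique) shortest path from `v1` to `v2` is `r`-significant:
it has an `r`-witness. -/
def RSignificant (S : Setting V) (r : ℝ) (v1 v2 : V) : Prop :=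
  ∃ a b : V, (a = v1 ∨ S.G.Adj a v1) ∧ (b = v2 ∨ S.G.Adj b v2) ∧
    r ≤ S.d a b ∧ IsSubwalk (S.sp v1 v2) (S.sp a b)

/-- The shortest path from `v1` to `v2` is `(r,2r)`-close to `v`,
i.e. it belongs to `S(v,r)`. -/
def InSvr (S : Setting V) (v : V) (r : ℝ) (v1 v2 : V) : Prop :=
  ∃ a b : V, (a = v1 ∨ S.G.Adj a v1) ∧ (b = v2 ∨ S.G.Adj b v2) ∧
    r ≤ S.d a b ∧ IsSubwalk (S.sp v1 v2) (S.sp a b) ∧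
    ∃ x ∈ (S.sp a b).support, S.d v x ≤ 2 * r

/-- Highway dimension at most `h`. -/
def HighwayDimLE (S : Setting V) (h : ℕ) : Prop :=
  ∀ (r : ℝ), 0 < r → ∀ v : V,
    ∃ C : Set V, C.ncard ≤ h ∧
      ∀ v1 v2 : V, S.InSvr v r v1 v2 → ∃ c ∈ C, c ∈ (S.sp v1 v2).support

/-- An `(r,h')`-SPHS. -/
def IsSPHS (S : Setting V) (r : ℝ) (h' : ℕ) (C : Set V) : Prop :=
  (∀ v1 v2 : V, S.RSignificant r v1 v2 → ∃ c ∈ C, c ∈ (S.sp v1 v2).support) ∧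
  (∀ v : V, (C ∩ S.ball v (2 * r)).ncard ≤ h')

/-- Adjacency in the `r`-shortcut graph `G(C,r)`. -/
def shortcutAdj (S : Setting V) (C : Set V) (r : ℝ) (v1 v2 : V) : Prop :=
  v1 ≠ v2 ∧ v1 ∈ C ∧ v2 ∈ C ∧ S.d v1 v2 ≤ r ∧
    ∀ c ∈ C, c ∈ (S.sp v1 v2).support → c = v1 ∨ c = v2

/-- An `(r,η)` path cover, a set of shortest paths represented by their
endpoint pairs. -/
def IsPathCover (S : Setting V) (r : ℝ) (η : ℕ) (P : Set (V × V)) : Prop :=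
  (∀ q ∈ P, r / 4 ≤ S.d q.1 q.2 ∧ S.d q.1 q.2 ≤ r) ∧
  (∀ v1 v2 : V, r / 2 ≤ S.d v1 v2 → S.d v1 v2 ≤ r → S.maxedgeLE v1 v2 (r / 8) →
    ∃ q ∈ P, IsSubwalk (S.sp q.1 q.2) (S.sp v1 v2) ∧
      S.d v1 q.1 ≤ r / 8 ∧ S.d q.2 v2 ≤ r / 8) ∧
  (∀ v : V, {q ∈ P | ∃ x ∈ (S.sp q.1 q.2).support, S.d v x ≤ 4 * r}.ncard ≤ η)

/-- A pair of vertices of `Cm` is *considered* at level `i`. -/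
def Considered (S : Setting V) (Cm : Set V) (i : ℤ) (q : V × V) : Prop :=
  q.1 ∈ Cm ∧ q.2 ∈ Cm ∧
    3 / 4 * (8 : ℝ) ^ i ≤ S.d q.1 q.2 ∧ S.d q.1 q.2 ≤ (8 : ℝ) ^ i ∧
    S.maxedgeLE q.1 q.2 ((8 : ℝ) ^ (i - 1))

/-- `C'` is a valid output of the greedy construction at level `i` from `Cm`. -/
def ValidGreedy (S : Setting V) (Cm : Set V) (i : ℤ) (C' : Set V) : Prop :=
  ∃ (m : ℕ) (q : Fin m → V × V),
    Function.Injective q ∧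
    (∀ p : V × V, S.Considered Cm i p ↔ ∃ j : Fin m, q j = p) ∧
    ∃ Sc : Fin (m + 1) → Set V,
      Sc 0 = ∅ ∧ Sc (Fin.last m) = C' ∧
      ∀ j : Fin m,
        ((∃ c ∈ Sc j.castSucc, c ∈ (S.sp (q j).1 (q j).2).support) →
          Sc j.succ = Sc j.castSucc) ∧
        ((¬ ∃ c ∈ Sc j.castSucc, c ∈ (S.sp (q j).1 (q j).2).support) →
          ∃ c ∈ Cm, c ∈ (S.sp (q j).1 (q j).2).support ∧
            (∀ c' ∈ Cm, c' ∈ (S.sp (q j).1 (q j).2).support →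
              |S.d (q j).1 c - S.d (q j).1 (q j).2 / 2| ≤
                |S.d (q j).1 c' - S.d (q j).1 (q j).2 / 2|) ∧
            Sc j.succ = insert c (Sc j.castSucc))

/-- The set of endpoints of edges of weight greater than `t`. -/
def bigEdgeEnds (S : Setting V) (t : ℝ) : Set V :=
  {x : V | ∃ e ∈ S.G.edgeSet, t < S.w e ∧ x ∈ e}

end Setting

/-! ### Auxiliary lemmas for the proof of Statement 6 -/

section Aux

set_option linter.unusedSectionVars false

open SimpleGraph Walk

variable {V : Type} [Fintype V]

lemma wlen_nil {G : SimpleGraph V} (w : Sym2 V → ℝ) {u : V} :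
    wlen w (Walk.nil : G.Walk u u) = 0 := by simp [wlen]

lemma wlen_cons {G : SimpleGraph V} (w : Sym2 V → ℝ) {u v x : V} (h : G.Adj u v)
    (p : G.Walk v x) : wlen w (Walk.cons h p) = w s(u, v) + wlen w p := by
  simp [wlen]

lemma wlen_append {G : SimpleGraph V} (w : Sym2 V → ℝ) {u v x : V} (p : G.Walk u v)
    (q : G.Walk v x) : wlen w (p.append q) = wlen w p + wlen w q := by
  simp [wlen, Walk.edges_append]

lemma wlen_reverse {G : SimpleGraph V} (w : Sym2 V → ℝ) {u v : V} (p : G.Walk u v) :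
    wlen w p.reverse = wlen w p := by
  simp [wlen, Walk.edges_reverse, List.sum_reverse]

namespace Setting

lemma wlen_nonneg (S : Setting V) {u v : V} (p : S.G.Walk u v) : 0 ≤ wlen S.w p := by
  apply List.sum_nonneg
  intro x hx
  obtain ⟨e, he, rfl⟩ := List.mem_map.1 hx
  have : e ∈ S.G.edgeSet := p.edges_subset_edgeSet he
  linarith [S.one_le_w e this]

lemma d_nonneg (S : Setting V) (u v : V) : 0 ≤ S.d u v := S.wlen_nonneg _

lemma d_le_wlen (S : Setting V) {u v : V} (q : S.G.Walk u v) : S.d u v ≤ wlen S.w q :=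
  S.sp_shortest u v q

lemma d_self (S : Setting V) (v : V) : S.d v v = 0 := by
  have h1 := S.d_le_wlen (Walk.nil : S.G.Walk v v)
  rw [wlen_nil] at h1
  exact le_antisymm h1 (S.d_nonneg v v)

lemma d_triangle (S : Setting V) (u x v : V) : S.d u v ≤ S.d u x + S.d x v := by
  have := S.d_le_wlen ((S.sp u x).append (S.sp x v))
  rwa [wlen_append] at this

/-- A subwalk of a shortest path is the shortest path between its endpoints. -/
lemma sub_sp (S : Setting V) {u w x y : V} (q1 : S.G.Walk u x) (m : S.G.Walk x y)
    (q2 : S.G.Walk y w) (hq : S.sp u w = (q1.append m).append q2) : m = S.sp x y := by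
  have hpath : ((q1.append m).append q2).IsPath := hq ▸ S.sp_isPath u w
  have hm : m.IsPath := hpath.of_append_left.of_append_right
  have h1 : wlen S.w (S.sp u w) ≤ wlen S.w ((q1.append (S.sp x y)).append q2) :=
    S.sp_shortest u w _
  have h2 : wlen S.w (S.sp x y) ≤ wlen S.w m := S.sp_shortest x y m
  rw [hq, wlen_append, wlen_append, wlen_append, wlen_append] at h1
  exact S.sp_unique x y m hm (by linarith)

lemma sub_sp_wlen (S : Setting V) {u w x y : V} (q1 : S.G.Walk u x) (m : S.G.Walk x y)
    (q2 : S.G.Walk y w) (hq : S.sp u w = (q1.append m).append q2) :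
    wlen S.w m = S.d x y := by
  rw [S.sub_sp q1 m q2 hq]; rfl

lemma sp_reverse (S : Setting V) (u v : V) : (S.sp u v).reverse = S.sp v u := by
  have h1 : S.d v u ≤ S.d u v := by
    have := S.d_le_wlen (S.sp u v).reverse
    rwa [wlen_reverse] at this
  have h2 : S.d u v ≤ S.d v u := by
    have := S.d_le_wlen (S.sp v u).reverse
    rwa [wlen_reverse] at this
  refine S.sp_unique v u _ ((S.sp_isPath u v).reverse) ?_
  rw [wlen_reverse]
  exact le_antisymm h2 h1

lemma d_symm (S : Setting V) (u v : V) : S.d u v = S.d v u := by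
  have h1 : S.d v u ≤ S.d u v := by
    have := S.d_le_wlen (S.sp u v).reverse
    rwa [wlen_reverse] at this
  have h2 : S.d u v ≤ S.d v u := by
    have := S.d_le_wlen (S.sp v u).reverse
    rwa [wlen_reverse] at this
  exact le_antisymm h2 h1

/-- Splitting a shortest path at a vertex of its support. -/
lemma split_parts (S : Setting V) {u w x : V} (hx : x ∈ (S.sp u w).support) :
    S.sp u w = (S.sp u x).append (S.sp x w) ∧ S.d u w = S.d u x + S.d x w := by
  classical
  have hspec := (S.sp u w).take_spec hx
  have h1 : (S.sp u w).takeUntil x hx = S.sp u x := by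
    apply S.sub_sp Walk.nil _ ((S.sp u w).dropUntil x hx)
    rw [Walk.nil_append, hspec]
  have h2 : (S.sp u w).dropUntil x hx = S.sp x w := by
    apply S.sub_sp ((S.sp u w).takeUntil x hx) _ Walk.nil
    rw [Walk.append_nil, hspec]
  constructor
  · rw [← h1, ← h2, hspec]
  · have := congrArg (wlen S.w) hspec
    rw [wlen_append, h1, h2] at this
    exact this.symm

lemma d_le_of_mem_left (S : Setting V) {u w x : V} (hx : x ∈ (S.sp u w).support) :
    S.d u x ≤ S.d u w := by
  have := (S.split_parts hx).2
  have h0 := S.d_nonneg x w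
  linarith

lemma d_le_of_mem_right (S : Setting V) {u w x : V} (hx : x ∈ (S.sp u w).support) :
    S.d x w ≤ S.d u w := by
  have := (S.split_parts hx).2
  have h0 := S.d_nonneg u x
  linarith

end Setting

lemma IsSubwalk.support_subset {G : SimpleGraph V} {u v a b : V}
    {p : G.Walk u v} {q : G.Walk a b} (h : _root_.IsSubwalk p q) : p.support ⊆ q.support := by
  obtain ⟨q1, q2, rfl⟩ := h
  intro x hx
  rw [Walk.mem_support_append_iff, Walk.mem_support_append_iff]
  exact Or.inl (Or.inr hx)

/-- A walk longer than `θ ≥ 0` splits as `p1 ++ e ++ p2` with `wlen p1 ≤ θ < wlen p1 + w e`. -/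
lemma exists_window {G : SimpleGraph V} (w : Sym2 V → ℝ) {u t : V} (p : G.Walk u t) :
    ∀ θ : ℝ, 0 ≤ θ → θ < wlen w p →
    ∃ (y y' : V) (e : G.Adj y y') (p1 : G.Walk u y) (p2 : G.Walk y' t),
      p = p1.append (Walk.cons e p2) ∧ wlen w p1 ≤ θ ∧ θ < wlen w p1 + w s(y, y') := by
  induction p with
  | nil =>
    intro θ h0 hlt
    rw [wlen_nil] at hlt
    exact absurd hlt (not_lt.2 h0)
  | @cons a c t e q ih =>
    intro θ h0 hlt
    rw [wlen_cons] at hlt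
    by_cases hcase : θ < w s(a, c)
    · exact ⟨a, c, e, Walk.nil, q, by simp, by rw [wlen_nil]; exact h0,
        by rw [wlen_nil]; linarith⟩
    · push_neg at hcase
      obtain ⟨y, y', e', p1, p2, heq, hle, hlt'⟩ :=
        ih (θ - w s(a, c)) (by linarith) (by linarith)
      refine ⟨y, y', e', Walk.cons e p1, p2, ?_, ?_, ?_⟩
      · rw [heq]; simp [Walk.cons_append]
      · rw [wlen_cons]; linarith
      · rw [wlen_cons]; linarith

end Aux

/-- Graphs of highway dimension at most `h` have `(r,η)` path
covers for every `r > 0`, with `η` depending only on `h`. -/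
theorem stmt6 (h : ℕ) :
    ∃ η : ℕ, ∀ (V : Type) [Fintype V] (S : Setting V), S.HighwayDimLE h →
      ∀ r : ℝ, 0 < r → ∃ P : Set (V × V), S.IsPathCover r η P := by
  classical
  refine ⟨((1 + 8 * h) ^ 11) ^ 2, ?_⟩
  intro V _ S hyp r hr
  -- the candidate covers: sets of pairs satisfying the first two conditions
  let good : Set (V × V) → Prop := fun P =>
    (∀ q ∈ P, r / 4 ≤ S.d q.1 q.2 ∧ S.d q.1 q.2 ≤ r) ∧
    (∀ v1 v2 : V, r / 2 ≤ S.d v1 v2 → S.d v1 v2 ≤ r → S.maxedgeLE v1 v2 (r / 8) →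
      ∃ q ∈ P, IsSubwalk (S.sp q.1 q.2) (S.sp v1 v2) ∧
        S.d v1 q.1 ≤ r / 8 ∧ S.d q.2 v2 ≤ r / 8)
  have hPall : good {p : V × V | r / 4 ≤ S.d p.1 p.2 ∧ S.d p.1 p.2 ≤ r} := by
    constructor
    · exact fun q hq => hq
    · intro v1 v2 h1 h2 _
      refine ⟨(v1, v2), ⟨by dsimp only; linarith, h2⟩,
        ⟨Walk.nil, Walk.nil, by simp⟩, ?_, ?_⟩
      · simpa [S.d_self] using by linarith
      · simpa [S.d_self] using by linarith
  -- a minimum-cardinality candidate cover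
  have hne : {n : ℕ | ∃ P : Set (V × V), good P ∧ P.ncard = n}.Nonempty := ⟨_, _, hPall, rfl⟩
  obtain ⟨P, hPgood, hPcard⟩ := Nat.sInf_mem hne
  have hmin : ∀ P' : Set (V × V), good P' → P.ncard ≤ P'.ncard := by
    intro P' hP'
    rw [hPcard]
    exact Nat.sInf_le ⟨P', hP', rfl⟩
  obtain ⟨hP1, hP2⟩ := hPgood
  refine ⟨P, hP1, hP2, ?_⟩
  -- hub sets from the highway dimension hypothesis, at scales r/16 * 2^k
  have hskpos : ∀ k : ℕ, (0:ℝ) < r / 16 * 2 ^ k := fun k => by positivity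
  have H : ∀ (u : V) (k : ℕ), ∃ C : Set V, C.ncard ≤ h ∧
      ∀ v1 v2 : V, S.InSvr u (r / 16 * 2 ^ k) v1 v2 → ∃ c ∈ C, c ∈ (S.sp v1 v2).support :=
    fun u k => hyp (r / 16 * 2 ^ k) (hskpos k) u
  choose Cf hCcard hChit using H
  have hCfin : ∀ u k, ((Set.toFinite (Cf u k)).toFinset).card ≤ h := by
    intro u k
    rw [← Set.ncard_eq_toFinset_card]
    exact hCcard u k
  -- the laddering step: from a center u, a hub at scale s gets within d(u,t) - 2s of t
  have step : ∀ (u t : V) (k : ℕ), 3 * (r / 16 * 2 ^ k) ≤ S.d u t →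
      ∃ c ∈ Cf u k, S.d c t ≤ S.d u t - 2 * (r / 16 * 2 ^ k) := by
    intro u t k hk
    have hs : (0:ℝ) < r / 16 * 2 ^ k := hskpos k
    have hlt0 : 2 * (r / 16 * 2 ^ k) < S.d u t := by linarith
    obtain ⟨y, y', e, p1, p2, heq, hle, hlt⟩ :=
      exists_window S.w (S.sp u t) (2 * (r / 16 * 2 ^ k)) (by linarith) hlt0
    have hp1 : p1 = S.sp u y :=
      S.sub_sp Walk.nil p1 (Walk.cons e p2) (by rw [Walk.nil_append]; exact heq)
    have hcons : Walk.cons e p2 = S.sp y t :=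
      S.sub_sp p1 (Walk.cons e p2) Walk.nil (by rw [Walk.append_nil]; exact heq)
    have hp2 : p2 = S.sp y' t := by
      apply S.sub_sp (p1.append (Walk.cons e Walk.nil)) p2 Walk.nil
      rw [Walk.append_nil, ← Walk.append_assoc, Walk.cons_append, Walk.nil_append]
      exact heq
    have hspy' : p1.append (Walk.cons e Walk.nil) = S.sp u y' := by
      apply S.sub_sp Walk.nil _ p2
      rw [Walk.nil_append, ← Walk.append_assoc, Walk.cons_append, Walk.nil_append]
      exact heq
    have hduy : S.d u y = wlen S.w p1 := by rw [hp1]; rfl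
    have hdyt : S.d y t = S.w s(y, y') + wlen S.w p2 := by
      rw [show S.d y t = wlen S.w (Walk.cons e p2) from by rw [hcons]; rfl, wlen_cons]
    have hduy' : S.d u y' = wlen S.w p1 + S.w s(y, y') := by
      rw [show S.d u y' = wlen S.w (p1.append (Walk.cons e Walk.nil)) from by rw [hspy']; rfl,
        wlen_append, wlen_cons, wlen_nil]
      ring
    have hsum : S.d u t = wlen S.w p1 + (S.w s(y, y') + wlen S.w p2) := by
      rw [show S.d u t = wlen S.w (p1.append (Walk.cons e p2)) from by rw [← heq]; rfl,
        wlen_append, wlen_cons]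
    have hy't : y' ∈ (S.sp u t).support := by
      rw [heq, Walk.mem_support_append_iff]
      exact Or.inr (by rw [Walk.support_cons]; exact List.mem_cons_of_mem _ p2.start_mem_support)
    have hsplit := (S.split_parts hy't).2
    have hsw : IsSubwalk (S.sp y' t) (S.sp y t) :=
      ⟨Walk.cons e Walk.nil, Walk.nil,
        by rw [← hcons, ← hp2, Walk.append_nil, Walk.cons_append, Walk.nil_append]⟩
    have hymem : y ∈ (S.sp y t).support := by
      rw [← hcons]; exact Walk.start_mem_support _
    obtain ⟨c, hc, hcsup⟩ := hChit u k y' t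
      ⟨y, t, Or.inr e, Or.inl rfl, by linarith, hsw, ⟨y, hymem, by linarith⟩⟩
    refine ⟨c, hc, ?_⟩
    have h1 : S.d c t ≤ S.d y' t := S.d_le_of_mem_right hcsup
    linarith
  -- now fix the center v and prove the sparsity bound
  intro v
  -- the iterated hub sets around v
  let Y : ℕ → Finset V := fun m => Nat.rec (motive := fun _ => Finset V) {v}
    (fun _ Ym => Ym ∪ Ym.biUnion (fun u =>
      (Finset.range 8).biUnion fun k => (Set.toFinite (Cf u k)).toFinset)) m
  have hY0 : Y 0 = {v} := rfl
  have hYsucc : ∀ m, Y (m + 1) = Y m ∪ (Y m).biUnion (fun u =>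
      (Finset.range 8).biUnion fun k => (Set.toFinite (Cf u k)).toFinset) := fun m => rfl
  have hYcard : ∀ m, (Y m).card ≤ (1 + 8 * h) ^ m := by
    intro m
    induction m with
    | zero => simp [hY0]
    | succ m ih =>
      rw [hYsucc]
      calc (Y m ∪ (Y m).biUnion _).card
          ≤ (Y m).card + ((Y m).biUnion _).card := Finset.card_union_le _ _
        _ ≤ (Y m).card + ∑ u ∈ Y m,
              ((Finset.range 8).biUnion fun k => (Set.toFinite (Cf u k)).toFinset).card :=
            Nat.add_le_add_left (Finset.card_biUnion_le) _
        _ ≤ (Y m).card + ∑ _u ∈ Y m, 8 * h := by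
            refine Nat.add_le_add_left (Finset.sum_le_sum ?_) _
            intro u _
            calc ((Finset.range 8).biUnion fun k => (Set.toFinite (Cf u k)).toFinset).card
                ≤ ∑ k ∈ Finset.range 8, ((Set.toFinite (Cf u k)).toFinset).card :=
                  Finset.card_biUnion_le
              _ ≤ ∑ _k ∈ Finset.range 8, h := Finset.sum_le_sum (fun k _ => hCfin u k)
              _ = 8 * h := by simp [Finset.sum_const]
        _ = (Y m).card * (1 + 8 * h) := by rw [Finset.sum_const, smul_eq_mul]; ring
        _ ≤ (1 + 8 * h) ^ m * (1 + 8 * h) := Nat.mul_le_mul_right _ ih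
        _ = (1 + 8 * h) ^ (m + 1) := (pow_succ _ _).symm
  have hYmono : ∀ m, Y m ⊆ Y (m + 1) := by
    intro m
    rw [hYsucc]
    exact Finset.subset_union_left
  have hYhub : ∀ m u k c, u ∈ Y m → k < 8 → c ∈ Cf u k → c ∈ Y (m + 1) := by
    intro m u k c hu hk hc
    rw [hYsucc]
    refine Finset.mem_union_right _ (Finset.mem_biUnion.2 ⟨u, hu, Finset.mem_biUnion.2
      ⟨k, Finset.mem_range.2 hk, ?_⟩⟩)
    simpa using hc
  -- the ladder: one can reach any vertex within 5r of v, down to distance 3r/16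
  have ladder : ∀ (m : ℕ) (t : V), S.d v t ≤ 5 * r →
      ∃ u ∈ Y m, S.d u t ≤ max (3 * r / 16) (5 * r * (2 / 3) ^ m) := by
    intro m
    induction m with
    | zero =>
      intro t ht
      refine ⟨v, by simp [hY0], ?_⟩
      refine le_trans ?_ (le_max_right _ _)
      simpa using ht
    | succ m ih =>
      intro t ht
      obtain ⟨u, hu, hd⟩ := ih t ht
      by_cases hle : S.d u t ≤ 3 * r / 16
      · exact ⟨u, hYmono m hu, le_trans hle (le_max_left _ _)⟩
      · push_neg at hle
        have hpow1 : ((2:ℝ) / 3) ^ m ≤ 1 := by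
          apply pow_le_one₀ <;> norm_num
        have hD5 : S.d u t ≤ 5 * r := by
          refine le_trans hd (max_le (by linarith) ?_)
          nlinarith
        have hD' : S.d u t ≤ 5 * r * (2 / 3) ^ m := by
          rcases le_max_iff.1 hd with h' | h'
          · linarith
          · exact h'
        have hP0 : 3 * (r / 16 * 2 ^ (0:ℕ)) ≤ S.d u t := by norm_num; linarith
        set Pk : ℕ → Prop := fun k => 3 * (r / 16 * 2 ^ k) ≤ S.d u t with hPkdef
        set K := Nat.findGreatest Pk 7 with hK
        have hPK : Pk K := Nat.findGreatest_spec (P := Pk) (Nat.zero_le 7) hP0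
        have hPK' : 3 * (r / 16 * 2 ^ K) ≤ S.d u t := hPK
        have hK7 : K ≤ 7 := Nat.findGreatest_le 7
        have hKne : K ≠ 7 := by
          intro hKeq
          rw [hKeq] at hPK'
          norm_num at hPK'
          linarith
        have hnot' : ¬ Pk (K + 1) :=
          Nat.findGreatest_is_greatest (Nat.lt_succ_self K) (by omega)
        have hnot : ¬ (3 * (r / 16 * 2 ^ (K + 1)) ≤ S.d u t) := hnot'
        push_neg at hnot
        have h6s : S.d u t < 6 * (r / 16 * 2 ^ K) := by
          have : (2:ℝ) ^ (K + 1) = 2 ^ K * 2 := pow_succ 2 K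
          nlinarith
        obtain ⟨c, hc, hdc⟩ := step u t K hPK
        refine ⟨c, hYhub m u K c hu (by omega) hc, ?_⟩
        have h23 : S.d c t ≤ 2 / 3 * S.d u t := by linarith
        refine le_trans ?_ (le_max_right _ _)
        have hmul : 2 / 3 * S.d u t ≤ 2 / 3 * (5 * r * (2 / 3) ^ m) := by linarith
        rw [pow_succ]
        nlinarith
  -- endpoint hubs: every pair at distance [r/2, r] starting within 5r of v
  -- has a hub of Y 11 near its first endpoint
  have EH : ∀ v1 v2 : V, r / 2 ≤ S.d v1 v2 → S.d v1 v2 ≤ r → S.d v v1 ≤ 5 * r →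
      ∃ y ∈ Y 11, y ∈ (S.sp v1 v2).support ∧ S.d v1 y ≤ r / 8 := by
    intro v1 v2 hd2 hdr hd5
    obtain ⟨u, hu, hdu⟩ := ladder 10 v1 hd5
    have hnum : 5 * r * ((2:ℝ) / 3) ^ 10 ≤ 3 * r / 16 := by
      have : ((2:ℝ) / 3) ^ 10 = 1024 / 59049 := by norm_num
      nlinarith
    have hdu' : S.d u v1 ≤ 3 * r / 16 := le_trans hdu (max_le le_rfl hnum)
    have hwlt : r / 8 < S.d v1 v2 := by linarith
    obtain ⟨u1, u1', e, p1, p2, heq, hle, hlt⟩ :=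
      exists_window S.w (S.sp v1 v2) (r / 8) (by linarith) hwlt
    have hp1 : p1 = S.sp v1 u1 :=
      S.sub_sp Walk.nil p1 (Walk.cons e p2) (by rw [Walk.nil_append]; exact heq)
    have hspy' : p1.append (Walk.cons e Walk.nil) = S.sp v1 u1' := by
      apply S.sub_sp Walk.nil _ p2
      rw [Walk.nil_append, ← Walk.append_assoc, Walk.cons_append, Walk.nil_append]
      exact heq
    have hdu1' : S.d v1 u1' = wlen S.w p1 + S.w s(u1, u1') := by
      rw [show S.d v1 u1' = wlen S.w (p1.append (Walk.cons e Walk.nil)) from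
        by rw [hspy']; rfl, wlen_append, wlen_cons, wlen_nil]
      ring
    have hsk1 : r / 16 * (2:ℝ) ^ (1:ℕ) = r / 8 := by ring
    have hsw : IsSubwalk (S.sp v1 u1) (S.sp v1 u1') :=
      ⟨Walk.nil, Walk.cons e Walk.nil, by rw [← hspy', ← hp1, Walk.nil_append]⟩
    obtain ⟨y, hy, hysup⟩ := hChit u 1 v1 u1
      ⟨v1, u1', Or.inl rfl, Or.inr e.symm, by rw [hsk1]; linarith, hsw,
        ⟨v1, Walk.start_mem_support _, by rw [hsk1]; linarith⟩⟩
    have hysup' : y ∈ p1.support := by rw [hp1]; exact hysup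
    refine ⟨y, hYhub 10 u 1 y hu (by norm_num) hy, ?_, ?_⟩
    · rw [heq, Walk.mem_support_append_iff]
      exact Or.inl hysup'
    · have h1 : S.d v1 y ≤ S.d v1 u1 := S.d_le_of_mem_left hysup
      have h2 : S.d v1 u1 = wlen S.w p1 := by rw [hp1]; rfl
      linarith
  -- the bounded exchange family
  have CP : ∀ v1 v2 : V, r / 2 ≤ S.d v1 v2 → S.d v1 v2 ≤ r →
      S.d v v1 ≤ 5 * r → S.d v v2 ≤ 5 * r →
      ∃ q : V × V, ((q.1 ∈ Y 11 ∧ q.2 ∈ Y 11) ∧ r / 4 ≤ S.d q.1 q.2 ∧ S.d q.1 q.2 ≤ r) ∧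
        IsSubwalk (S.sp q.1 q.2) (S.sp v1 v2) ∧ S.d v1 q.1 ≤ r / 8 ∧ S.d q.2 v2 ≤ r / 8 := by
    intro v1 v2 hd2 hdr h51 h52
    obtain ⟨y1, hy1Y, hy1sup, hy1d⟩ := EH v1 v2 hd2 hdr h51
    obtain ⟨y2, hy2Y, hy2sup', hy2d'⟩ := EH v2 v1
      (by rw [S.d_symm]; exact hd2) (by rw [S.d_symm]; exact hdr) h52
    have hy2sup : y2 ∈ (S.sp v1 v2).support := by
      rw [← S.sp_reverse v1 v2, Walk.support_reverse, List.mem_reverse] at hy2sup'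
      exact hy2sup'
    have hy2d : S.d y2 v2 ≤ r / 8 := by rw [S.d_symm]; exact hy2d'
    obtain ⟨hgeq, hgd⟩ := S.split_parts hy2sup
    have hy1loc : y1 ∈ (S.sp v1 y2).support ∨ y1 ∈ (S.sp y2 v2).support := by
      rw [hgeq, Walk.mem_support_append_iff] at hy1sup
      exact hy1sup
    rcases hy1loc with hloc | hloc
    · obtain ⟨heq2, hd2'⟩ := S.split_parts hloc
      have hn1 : 0 ≤ S.d v1 y1 := S.d_nonneg _ _
      have hn2 : 0 ≤ S.d y2 v2 := S.d_nonneg _ _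
      have hn3 : 0 ≤ S.d y1 y2 := S.d_nonneg _ _
      refine ⟨(y1, y2), ⟨⟨hy1Y, hy2Y⟩, by dsimp only; constructor <;> linarith⟩,
        ⟨S.sp v1 y1, S.sp y2 v2, by rw [hgeq, heq2]⟩, hy1d, hy2d⟩
    · exfalso
      have h1 : S.d y1 v2 ≤ S.d y2 v2 := S.d_le_of_mem_right hloc
      have h2 : S.d v1 v2 ≤ S.d v1 y1 + S.d y1 v2 := S.d_triangle _ _ _
      linarith
  -- the exchange argument
  have hQP : {q ∈ P | ∃ x ∈ (S.sp q.1 q.2).support, S.d v x ≤ 4 * r} ⊆ P := fun q hq => hq.1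
  set Q : Set (V × V) := {q ∈ P | ∃ x ∈ (S.sp q.1 q.2).support, S.d v x ≤ 4 * r} with hQdef
  set F : Set (V × V) :=
    {p : V × V | (p.1 ∈ Y 11 ∧ p.2 ∈ Y 11) ∧ r / 4 ≤ S.d p.1 p.2 ∧ S.d p.1 p.2 ≤ r} with hFdef
  have hP' : good ((P \ Q) ∪ F) := by
    constructor
    · rintro q (⟨hqP, -⟩ | hqF)
      · exact hP1 q hqP
      · exact hqF.2
    · intro v1 v2 hd2 hdr hme
      obtain ⟨q, hqP, hsub, hm1, hm2⟩ := hP2 v1 v2 hd2 hdr hme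
      by_cases hqQ : q ∈ Q
      · obtain ⟨-, x, hxsup, hxd⟩ := hqQ
        have hxg : x ∈ (S.sp v1 v2).support := hsub.support_subset hxsup
        have h1 : S.d v1 x ≤ S.d v1 v2 := S.d_le_of_mem_left hxg
        have h2 : S.d x v2 ≤ S.d v1 v2 := S.d_le_of_mem_right hxg
        have h51 : S.d v v1 ≤ 5 * r := by
          have ht := S.d_triangle v x v1
          have hs := S.d_symm v1 x
          linarith
        have h52 : S.d v v2 ≤ 5 * r := by
          have ht := S.d_triangle v x v2
          linarith
        obtain ⟨q', hq'F, hq'1, hq'2, hq'3⟩ := CP v1 v2 hd2 hdr h51 h52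
        exact ⟨q', Or.inr hq'F, hq'1, hq'2, hq'3⟩
      · exact ⟨q, Or.inl ⟨hqP, hqQ⟩, hsub, hm1, hm2⟩
  have hFcard : F.ncard ≤ ((1 + 8 * h) ^ 11) ^ 2 := by
    have hsubF : F ⊆ ((Y 11 ×ˢ Y 11 : Finset (V × V)) : Set (V × V)) := by
      rintro ⟨a, b⟩ ⟨⟨ha, hb⟩, -⟩
      simp only [Finset.coe_product, Set.mem_prod]
      exact ⟨ha, hb⟩
    calc F.ncard ≤ ((Y 11 ×ˢ Y 11 : Finset (V × V)) : Set (V × V)).ncard :=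
          Set.ncard_le_ncard hsubF (Set.toFinite _)
      _ = (Y 11 ×ˢ Y 11).card := Set.ncard_coe_finset _
      _ = (Y 11).card * (Y 11).card := Finset.card_product _ _
      _ ≤ (1 + 8 * h) ^ 11 * (1 + 8 * h) ^ 11 := Nat.mul_le_mul (hYcard 11) (hYcard 11)
      _ = ((1 + 8 * h) ^ 11) ^ 2 := (sq _).symm
  have hmin' := hmin _ hP'
  have hu : ((P \ Q) ∪ F).ncard ≤ (P \ Q).ncard + F.ncard := Set.ncard_union_le _ _
  have hdiff : (P \ Q).ncard = P.ncard - Q.ncard := Set.ncard_diff hQP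
  have hQle : Q.ncard ≤ P.ncard := Set.ncard_le_ncard hQP (Set.toFinite _)
  have hfin : Q.ncard ≤ F.ncard := by omega
  exact le_trans hfin hFcard
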